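/- arXiv:2509.06018 — 3 statements merged into one kernel-verified Lean document; each statement's English description precedes it below -/
import Mathlib

section
/- Let d ≥ 1 and k ≥ 1 be integers, let m be an integer with m > 2k, and set N = 2m(k+1). Let π : ℤ^d → (ℤ/Nℤ)^d be the natural quotient map. Then for every subset S ⊆ (ℤ/Nℤ)^d with |S| ≤ k there exists v ∈ ℤ^d such that for every t ∈ π^{−1}(S) ∩ (v + [1,N]^d), the cube t + [−m,m]^d is contained in v + [1,N]^d. -/
lemma torus_core (k m N : ℕ) (hm : 2 * k < m) (hN : N = 2 * m * (k + 1))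
    (jj : ℕ) (hj : jj ≤ k) (r : ℕ) (hrN : r < N)
    (hne : r / (2 * m) ≠ jj) (t : ℤ)
    (hdvd : (N : ℤ) ∣ t - r)
    (hlo : 2 * ((m * jj : ℕ) : ℤ) + m ≤ t) (hhi : t ≤ 2 * ((m * jj : ℕ) : ℤ) + m - 1 + N) :
    2 * ((m * jj : ℕ) : ℤ) + 2 * m ≤ t ∧ t ≤ 2 * ((m * jj : ℕ) : ℤ) + N - 1 := by
  obtain ⟨q, hq⟩ := hdvd
  have hA : m * jj ≤ m * k := Nat.mul_le_mul_left _ hj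
  have hNeq : N = 2 * (m * k) + 2 * m := by rw [hN]; ring
  have hNpos : (0 : ℤ) < N := by
    have : 0 < N := by omega
    exact_mod_cast this
  have hb1 : (N : ℤ) * q < N * 2 := by
    have hAz : ((m * jj : ℕ) : ℤ) ≤ ((m * k : ℕ) : ℤ) := by exact_mod_cast hA
    have hNz : (N : ℤ) = 2 * ((m * k : ℕ) : ℤ) + 2 * m := by exact_mod_cast congrArg (Nat.cast : ℕ → ℤ) hNeq
    have hm1 : (1 : ℤ) ≤ m := by exact_mod_cast Nat.one_le_iff_ne_zero.mpr (by omega)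
    omega
  have hb2 : (N : ℤ) * (-1) < N * q := by
    have hrz : (r : ℤ) < N := by exact_mod_cast hrN
    have hmz : (0 : ℤ) ≤ ((m * jj : ℕ) : ℤ) := by positivity
    have hm1 : (1 : ℤ) ≤ m := by exact_mod_cast Nat.one_le_iff_ne_zero.mpr (by omega)
    omega
  have hq1 : q < 2 := lt_of_mul_lt_mul_left hb1 (le_of_lt hNpos)
  have hq0 : -1 < q := lt_of_mul_lt_mul_left hb2 (le_of_lt hNpos)
  have e1 : jj * (2 * m) = 2 * (m * jj) := by ring
  have e2 : (jj + 1) * (2 * m) = 2 * (m * jj) + 2 * m := by ring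
  interval_cases q
  · -- t = r
    have ht : t = (r : ℤ) := by linarith [hq]
    constructor
    · by_contra hcon
      push_neg at hcon
      apply hne
      apply Nat.div_eq_of_lt_le
      · rw [e1]; omega
      · rw [e2]; omega
    · omega
  · -- t = r + N
    have ht : t = (r : ℤ) + N := by linarith [hq]
    have hrlt : r < 2 * (m * jj) := by
      by_contra hcon
      push_neg at hcon
      apply hne
      apply Nat.div_eq_of_lt_le
      · rw [e1]; omega
      · rw [e2]; omega
    constructor
    · omega
    · omega

/-- For `N = 2m(k+1)` with `m > 2k`, any set `S` of at most `k` points in the torus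
`(ℤ/Nℤ)^d` admits a fundamental domain `v + [1,N]^d` such that for every lift `t` of a point
of `S` lying in `v + [1,N]^d`, the whole cube `t + [-m,m]^d` stays inside `v + [1,N]^d`. -/
theorem torus_lifts_with_margin
    (d k m : ℕ) (hd : 1 ≤ d) (hk : 1 ≤ k) (hm : 2 * k < m)
    (N : ℕ) (hN : N = 2 * m * (k + 1))
    (S : Finset (Fin d → ZMod N)) (hS : S.card ≤ k) :
    ∃ v : Fin d → ℤ, ∀ t : Fin d → ℤ,
      ((fun i => ((t i : ℤ) : ZMod N)) ∈ S ∧ ∀ i, t i ∈ Set.Icc (v i + 1) (v i + (N : ℤ))) →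
      ∀ u : Fin d → ℤ, (∀ i, |u i| ≤ (m : ℤ)) →
      ∀ i, t i + u i ∈ Set.Icc (v i + 1) (v i + (N : ℤ)) := by
  have hNpos : 0 < N := by
    rw [hN]; exact Nat.mul_pos (Nat.mul_pos (by omega) (by omega)) (by omega)
  haveI : NeZero N := ⟨by omega⟩
  have hchoice : ∀ i : Fin d, ∃ j : ℕ, j ≤ k ∧ ∀ s ∈ S, (s i).val / (2 * m) ≠ j := by
    intro i
    by_contra h
    push_neg at h
    have hsub : Finset.range (k + 1) ⊆ S.image (fun s => (s i).val / (2 * m)) := by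
      intro j hj
      simp only [Finset.mem_range] at hj
      obtain ⟨s, hs, hsj⟩ := h j (by omega)
      exact Finset.mem_image.2 ⟨s, hs, hsj⟩
    have h1 := Finset.card_le_card hsub
    have h2 := Finset.card_image_le (s := S) (f := fun s => (s i).val / (2 * m))
    rw [Finset.card_range] at h1
    have h3 := le_trans h1 h2
    exact Nat.not_succ_le_self k (h3.trans hS)
  choose j hjk hjS using hchoice
  refine ⟨fun i => 2 * ((m : ℤ) * (j i : ℤ)) + (m : ℤ) - 1, ?_⟩
  rintro t ⟨htS, htv⟩ u hu i
  have hrN : ((t i : ℤ) : ZMod N).val < N := ZMod.val_lt _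
  have hne : ((t i : ℤ) : ZMod N).val / (2 * m) ≠ j i := hjS i _ htS
  have hdvd : (N : ℤ) ∣ t i - (((t i : ℤ) : ZMod N).val : ℤ) := by
    have : ((t i - ((((t i : ℤ) : ZMod N).val : ℕ) : ℤ) : ℤ) : ZMod N) = 0 := by
      push_cast [ZMod.natCast_val, ZMod.cast_id]
      ring
    exact (ZMod.intCast_zmod_eq_zero_iff_dvd _ _).mp this
  obtain ⟨hlo', hhi'⟩ := htv i
  dsimp only at hlo' hhi'
  have hc : ((m * j i : ℕ) : ℤ) = (m : ℤ) * (j i : ℤ) := by push_cast; ring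
  have hcore := torus_core k m N hm hN (j i) (hjk i) _ hrN hne (t i) hdvd
    (by rw [hc]; linarith) (by rw [hc]; linarith)
  rw [hc] at hcore
  have habs := abs_le.mp (hu i)
  simp only [Set.mem_Icc]
  constructor
  · linarith [hcore.1, habs.1]
  · linarith [hcore.2, habs.2]
end

section
/- Let φ be a finitary homomorphism from the i.i.d. process with marginal p to the i.i.d. process with marginal q, n ∈ ℕ, and ψ : A^{B(0,n)} → B ∪ {*} the associated local map. Let N ≥ 2n+1 and let S ⊂ ℤ^d be a finite set such that ⋃_{s∈S}(s + B(0,n)) ⊆ u_0 + [1,N]^d for some u_0 ∈ ℤ^d. Let X̂ be distributed as p^{⊗(ℤ/Nℤ)^d}, with N-periodic extension X̃, and set Ẑ_s = ψ((X̃(s+i))_{i∈B(0,n)}) for s ∈ S. Then there exists a coupling of (Ẑ_s)_{s∈S} with a family (W_s)_{s∈S} of independent B-valued random variables each with law q, such that almost surely, for every s ∈ S, Ẑ_s ≠ W_s implies Ẑ_s = *. -/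
open MeasureTheory Finset Filter
open scoped ENNReal NNReal

noncomputable section

/-- The discrete cube `[-n, n]^d ⊂ ℤ^d`. -/
def ball (d n : ℕ) : Finset (Fin d → ℤ) :=
  Fintype.piFinset fun _ => Finset.Icc (-(n : ℤ)) (n : ℤ)

/-- The shift action of `ℤ^d`: `(T_u x)(v) = x(v + u)`. -/
def shift {d : ℕ} {A : Type*} (u : Fin d → ℤ) (x : (Fin d → ℤ) → A) : (Fin d → ℤ) → A :=
  fun v => x (v + u)

/-- `μ` is the i.i.d. product measure on `A^{ℤ^d}` with marginal probability vector `p`: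
it is a probability measure giving each cylinder set the corresponding product probability. -/
def IsIID {d : ℕ} {A : Type*} [MeasurableSpace A]
    (μ : Measure ((Fin d → ℤ) → A)) (p : A → ℝ) : Prop :=
  IsProbabilityMeasure μ ∧
    ∀ (s : Finset (Fin d → ℤ)) (w : (Fin d → ℤ) → A),
      μ {x | ∀ i ∈ s, x i = w i} = ∏ i ∈ s, ENNReal.ofReal (p (w i))

/-- A homomorphism (factor map) between the processes: a measurable, measure-preserving map
which is `μ`-a.e. equivariant for every shift. -/
structure IsFactorMap {d : ℕ} {A B : Type*} [MeasurableSpace A] [MeasurableSpace B]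
    (μ : Measure ((Fin d → ℤ) → A)) (ν : Measure ((Fin d → ℤ) → B))
    (φ : ((Fin d → ℤ) → A) → ((Fin d → ℤ) → B)) : Prop where
  measurable : Measurable φ
  map_eq : Measure.map φ μ = ν
  equivariant : ∀ u : Fin d → ℤ, ∀ᵐ x ∂μ, φ (shift u x) = shift u (φ x)

/-- The coding radius of `φ` at `x`: the least `n ∈ ℕ ∪ {∞}` such that for `μ`-a.e. `a`,
agreement with `x` on `[-n,n]^d` forces `φ(a)₀ = φ(x)₀`. -/
def codingRadius {d : ℕ} {A B : Type*} [MeasurableSpace A]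
    (μ : Measure ((Fin d → ℤ) → A))
    (φ : ((Fin d → ℤ) → A) → ((Fin d → ℤ) → B)) (x : (Fin d → ℤ) → A) : ℕ∞ :=
  sInf {N : ℕ∞ | ∃ n : ℕ, N = n ∧
    ∀ᵐ a ∂μ, (∀ i ∈ ball d n, a i = x i) → φ a 0 = φ x 0}

/-- The `N`-periodic extension of a configuration on the torus `(ℤ/Nℤ)^d`. -/
def torusExt {d N : ℕ} {A : Type*} (xhat : (Fin d → ZMod N) → A) : (Fin d → ℤ) → A :=
  fun u => xhat fun i => ((u i : ℤ) : ZMod N)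

namespace TMC

variable {d : ℕ} {A : Type*} [MeasurableSpace A]

lemma measurable_shift (u : Fin d → ℤ) : Measurable (shift (d := d) (A := A) u) :=
  measurable_pi_iff.mpr fun v => measurable_pi_apply (v + u)

def cylSet (F : Finset (Fin d → ℤ)) (w : (Fin d → ℤ) → A) : Set ((Fin d → ℤ) → A) :=
  {x | ∀ i ∈ F, x i = w i}

lemma measurableSet_cyl [MeasurableSingletonClass A] (F : Finset (Fin d → ℤ))
    (w : (Fin d → ℤ) → A) : MeasurableSet (cylSet F w) := by
  have h : cylSet F w = ⋂ i ∈ F, (fun x : (Fin d → ℤ) → A => x i) ⁻¹' {w i} := by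
    ext x; simp [cylSet]
  rw [h]
  exact MeasurableSet.biInter F.countable_toSet
    (fun i _ => (measurable_pi_apply i) (measurableSet_singleton _))

def cyls (d : ℕ) (A : Type*) [MeasurableSpace A] : Set (Set ((Fin d → ℤ) → A)) :=
  {t | ∃ F w, t = cylSet F w}

lemma isPiSystem_cyls : IsPiSystem (cyls d A) := by
  rintro t1 ⟨F1, w1, rfl⟩ t2 ⟨F2, w2, rfl⟩ ⟨x0, hx1, hx2⟩
  refine ⟨F1 ∪ F2, x0, ?_⟩
  ext x
  simp only [cylSet, Set.mem_inter_iff, Set.mem_setOf_eq, Finset.mem_union]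
  constructor
  · rintro ⟨h1, h2⟩ i (hi | hi)
    · rw [h1 i hi, ← hx1 i hi]
    · rw [h2 i hi, ← hx2 i hi]
  · intro h
    exact ⟨fun i hi => (h i (Or.inl hi)).trans (hx1 i hi),
           fun i hi => (h i (Or.inr hi)).trans (hx2 i hi)⟩

lemma pi_eq_generateFrom_cyls [MeasurableSingletonClass A] [Countable A] :
    (inferInstance : MeasurableSpace ((Fin d → ℤ) → A))
      = MeasurableSpace.generateFrom (cyls d A) := by
  have hev : ∀ i : Fin d → ℤ,
      @Measurable ((Fin d → ℤ) → A) A (MeasurableSpace.generateFrom (cyls d A)) _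
        (fun x : (Fin d → ℤ) → A => x i) := by
    intro i
    refine @measurable_to_countable' A ((Fin d → ℤ) → A) _ _
      (MeasurableSpace.generateFrom (cyls d A)) _ ?_
    intro a
    have h : (fun x : (Fin d → ℤ) → A => x i) ⁻¹' {a} = cylSet {i} (fun _ => a) := by
      ext x; simp [cylSet]
    rw [h]
    exact MeasurableSpace.measurableSet_generateFrom ⟨{i}, _, rfl⟩
  apply le_antisymm
  · exact iSup_le fun i => measurable_iff_comap_le.mp (hev i)
  · exact MeasurableSpace.generateFrom_le (by rintro t ⟨F, w, rfl⟩; exact measurableSet_cyl F w)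

lemma iid_unique [MeasurableSingletonClass A] [Countable A]
    {μ1 μ2 : Measure ((Fin d → ℤ) → A)} {p : A → ℝ}
    (h1 : IsIID μ1 p) (h2 : IsIID μ2 p) : μ1 = μ2 := by
  haveI := h1.1; haveI := h2.1
  refine ext_of_generate_finite _ pi_eq_generateFrom_cyls isPiSystem_cyls ?_ ?_
  · rintro t ⟨F, w, rfl⟩
    have e : cylSet F w = {x : (Fin d → ℤ) → A | ∀ i ∈ F, x i = w i} := rfl
    rw [e, h1.2, h2.2]
  · simp

lemma shift_iid [MeasurableSingletonClass A] {μ : Measure ((Fin d → ℤ) → A)} {p : A → ℝ} (h : IsIID μ p)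
    (u : Fin d → ℤ) : IsIID (Measure.map (shift u) μ) p := by
  haveI := h.1
  constructor
  · exact Measure.isProbabilityMeasure_map (measurable_shift u).aemeasurable
  · intro F w
    rw [Measure.map_apply (measurable_shift u)
      (show MeasurableSet {x : (Fin d → ℤ) → A | ∀ i ∈ F, x i = w i} from measurableSet_cyl F w)]
    have hpre : shift u ⁻¹' {x : (Fin d → ℤ) → A | ∀ i ∈ F, x i = w i}
        = {x | ∀ j ∈ F.image (· + u), x j = w (j - u)} := by
      ext x
      simp only [Set.mem_preimage, Set.mem_setOf_eq, shift, Finset.mem_image]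
      constructor
      · rintro h j ⟨i, hi, rfl⟩
        simpa using h i hi
      · intro h i hi
        have := h (i + u) ⟨i, hi, rfl⟩
        simpa using this
    rw [hpre, h.2]
    rw [Finset.prod_image (fun a _ b _ hab => by simpa using hab)]
    exact Finset.prod_congr rfl (fun i _ => by simp)

lemma map_shift_eq [MeasurableSingletonClass A] [Countable A]
    {μ : Measure ((Fin d → ℤ) → A)} {p : A → ℝ} (h : IsIID μ p) (u : Fin d → ℤ) :
    Measure.map (shift u) μ = μ :=
  iid_unique (shift_iid h u) h

def extF {d : ℕ} {A : Type*} [Nonempty A] (F : Finset (Fin d → ℤ)) (w : F → A) :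
    (Fin d → ℤ) → A :=
  fun i => if h : i ∈ F then w ⟨i, h⟩ else Classical.arbitrary A

lemma measure_local_event [MeasurableSingletonClass A] [Fintype A] [Nonempty A]
    {μ : Measure ((Fin d → ℤ) → A)} {p : A → ℝ} (h : IsIID μ p)
    (F : Finset (Fin d → ℤ)) (P : ((Fin d → ℤ) → A) → Prop)
    [DecidablePred fun w : F → A => P (extF F w)]
    (hP : ∀ x y, (∀ i ∈ F, x i = y i) → P x → P y) :
    μ {x | P x}
      = ∑ w : (F → A), if P (extF F w) then ∏ i, ENNReal.ofReal (p (w i)) else 0 := by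
  classical
  have hPiff : ∀ x y, (∀ i ∈ F, x i = y i) → (P x ↔ P y) := by
    intro x y hxy
    exact ⟨hP x y hxy, hP y x (fun i hi => (hxy i hi).symm)⟩
  have hagree : ∀ x : (Fin d → ℤ) → A, ∀ i ∈ F, x i = extF F (fun j : F => x j) i := by
    intro x i hi; simp [extF, hi]
  have hset : {x | P x}
      = ⋃ w ∈ Finset.univ.filter (fun w : F → A => P (extF F w)),
          cylSet F (extF F w) := by
    ext x
    simp only [Set.mem_setOf_eq, Set.mem_iUnion, Finset.mem_filter, Finset.mem_univ,
      true_and, cylSet]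
    constructor
    · intro hx
      refine ⟨fun j : F => x j, ?_, ?_⟩
      · exact hP x _ (hagree x) hx
      · intro i hi; simp [extF, hi]
    · rintro ⟨w, hw, hxw⟩
      exact hP _ x (fun i hi => (hxw i hi).symm) hw
  rw [hset, measure_biUnion_finset ?_ (fun w _ => measurableSet_cyl F (extF F w))]
  · rw [Finset.sum_filter]
    refine Finset.sum_congr rfl fun w _ => ?_
    by_cases hw : P (extF F w)
    · rw [if_pos hw, if_pos hw]
      have := h.2 F (extF F w)
      have e : cylSet F (extF F w) = {x : (Fin d → ℤ) → A | ∀ i ∈ F, x i = extF F w i} := rfl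
      rw [e, this, ← Finset.prod_coe_sort F (fun i => ENNReal.ofReal (p (extF F w i)))]
      exact Finset.prod_congr rfl fun i _ => by simp [extF, i.2]
    · rw [if_neg hw, if_neg hw]
  · intro w1 h1 w2 h2 hne
    refine Set.disjoint_left.mpr fun x hx1 hx2 => hne ?_
    funext i
    have e1 := hx1 i.1 i.2
    have e2 := hx2 i.1 i.2
    change x i.1 = extF F w1 i.1 at e1
    change x i.1 = extF F w2 i.1 at e2
    rw [extF] at e1 e2
    simp only [i.2, dif_pos] at e1 e2
    rw [← e1, ← e2]

lemma sum_prod_one {ι : Type*} [Fintype ι] [DecidableEq ι] {B : Type*} [Fintype B] {p : B → ℝ}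
    (hp : ∀ a, 0 ≤ p a) (hp1 : ∑ a, p a = 1) :
    ∑ r : ι → B, ∏ i, ENNReal.ofReal (p (r i)) = 1 := by
  classical
  have h1 : (∏ _i : ι, ∑ a : B, ENNReal.ofReal (p a))
      = ∑ x ∈ Fintype.piFinset (fun _ : ι => (Finset.univ : Finset B)),
          ∏ i : ι, ENNReal.ofReal (p (x i)) :=
    Finset.prod_univ_sum _ _
  rw [Fintype.piFinset_univ] at h1
  rw [← h1]
  have h2 : ∑ a : B, ENNReal.ofReal (p a) = 1 := by
    rw [← ENNReal.ofReal_sum_of_nonneg (fun a _ => hp a), hp1, ENNReal.ofReal_one]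
  simp [h2]

lemma measure_fintype_event {Ω : Type*} [Fintype Ω] [MeasurableSpace Ω]
    (hsing : ∀ ω : Ω, MeasurableSet ({ω} : Set Ω)) (μ : Measure Ω) (P : Ω → Prop)
    [DecidablePred P] :
    μ {ω | P ω} = ∑ ω : Ω, if P ω then μ {ω} else 0 := by
  have hset : {ω | P ω} = ⋃ ω ∈ Finset.univ.filter P, ({ω} : Set Ω) := by
    ext ω; simp
  rw [hset, measure_biUnion_finset ?_ (fun b _ => hsing b), Finset.sum_filter]
  intro a _ b _ hab
  exact Set.disjoint_singleton.mpr hab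

end TMC

set_option maxHeartbeats 1000000

/-- The coupling of Proposition 2.2(2): if all the windows `s + [-n,n]^d`, `s ∈ S`, fit inside
a single fundamental domain `u₀ + [1,N]^d`, then the family `(Ẑ_s)_{s∈S}` of torus-model values
can be coupled with an i.i.d. family `(W_s)_{s∈S}` of `q`-distributed symbols so that almost
surely `Ẑ_s ≠ W_s` only where `Ẑ_s = *`. -/
theorem torus_model_coupling
    {d : ℕ} (hd : 1 ≤ d)
    {A B : Type*} [Fintype A] [Nonempty A] [Fintype B] [Nonempty B] [DecidableEq B]
    [MeasurableSpace A] [MeasurableSingletonClass A]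
    [MeasurableSpace B] [MeasurableSingletonClass B]
    (p : A → ℝ) (q : B → ℝ) (hp : ∀ a, 0 < p a) (hq : ∀ b, 0 < q b)
    (hp1 : ∑ a, p a = 1) (hq1 : ∑ b, q b = 1)
    (μ : Measure ((Fin d → ℤ) → A)) (ν : Measure ((Fin d → ℤ) → B))
    (hμ : IsIID μ p) (hν : IsIID ν q)
    (φ : ((Fin d → ℤ) → A) → ((Fin d → ℤ) → B))
    (hφ : IsFactorMap μ ν φ)
    (hfin : ∀ᵐ x ∂μ, codingRadius μ φ x < ⊤)
    (n : ℕ) (ψ : ((Fin d → ℤ) → A) → Option B)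
    (hloc : ∀ x y, (∀ i ∈ ball d n, x i = y i) → ψ x = ψ y)
    (hae : μ {x | ψ x ≠
      (if codingRadius μ φ x ≤ (n : ℕ∞) then (some (φ x 0) : Option B) else none)} = 0)
    (N : ℕ) [NeZero N] (hNn : 2 * n + 1 ≤ N)
    (μhat : Measure ((Fin d → ZMod N) → A)) (hμhatP : IsProbabilityMeasure μhat)
    (hμhat : ∀ what : (Fin d → ZMod N) → A,
      μhat {what} = ∏ u : Fin d → ZMod N, ENNReal.ofReal (p (what u)))
    (S : Finset (Fin d → ℤ))
    (hS : ∃ u₀ : Fin d → ℤ, ∀ s ∈ S, ∀ j ∈ ball d n, ∀ i,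
      u₀ i + 1 ≤ s i + j i ∧ s i + j i ≤ u₀ i + (N : ℤ)) :
    ∃ (Ω' : Type) (_ : MeasurableSpace Ω') (κ : Measure Ω') (_ : IsProbabilityMeasure κ)
      (Z : Ω' → (S → Option B)) (W : Ω' → (S → B)),
      (∀ z : S → Option B, κ {ω | Z ω = z}
          = μhat {xhat | ∀ s : S, ψ (shift (s : Fin d → ℤ) (torusExt xhat)) = z s}) ∧
      (∀ w : S → B, κ {ω | W ω = w} = ∏ s : S, ENNReal.ofReal (q (w s))) ∧
      (∀ᵐ ω ∂κ, ∀ s : S, Z ω s ≠ some (W ω s) → Z ω s = none) := by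
  classical
  obtain ⟨u₀, hu₀⟩ := hS
  haveI : IsProbabilityMeasure μ := hμ.1
  set π : (Fin d → ℤ) → (Fin d → ZMod N) := fun u i => ((u i : ℤ) : ZMod N) with hπ
  set F : Finset (Fin d → ℤ) := S.biUnion (fun s => (ball d n).image (fun j => j + s)) with hF
  have hFbound : ∀ u ∈ F, ∀ i, u₀ i + 1 ≤ u i ∧ u i ≤ u₀ i + (N : ℤ) := by
    intro u hu i
    rcases Finset.mem_biUnion.mp hu with ⟨s, hs, hj⟩
    rcases Finset.mem_image.mp hj with ⟨j, hjb, rfl⟩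
    have h := hu₀ s hs j hjb i
    have e : (j + s) i = s i + j i := by simp [add_comm]
    rw [e]; exact h
  have hπinj : ∀ u ∈ F, ∀ v ∈ F, π u = π v → u = v := by
    intro u hu v hv huv
    funext i
    have h1 := hFbound u hu i
    have h2 := hFbound v hv i
    have hc : ((u i : ℤ) : ZMod N) = ((v i : ℤ) : ZMod N) := congrFun huv i
    have hdvd : (N : ℤ) ∣ (v i - u i) := ((ZMod.intCast_eq_intCast_iff _ _ _).mp hc).dvd
    have hNpos : (0 : ℤ) < (N : ℤ) := by exact_mod_cast Nat.pos_of_ne_zero (NeZero.ne N)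
    have habs : |v i - u i| < (N : ℤ) := by rw [abs_lt]; omega
    have := Int.eq_zero_of_abs_lt_dvd hdvd habs
    omega
  set G : Finset (Fin d → ZMod N) := F.image π with hG
  -- the law of the Z family
  have law_core : ∀ z : S → Option B,
      μ {x | ∀ s : S, ψ (shift (s : Fin d → ℤ) x) = z s}
        = μhat {xhat | ∀ s : S, ψ (shift (s : Fin d → ℤ) (torusExt xhat)) = z s} := by
    intro z
    set f : A → ℝ≥0∞ := fun a => ENNReal.ofReal (p a) with hf
    let P : ((Fin d → ℤ) → A) → Prop := fun x => ∀ s : S, ψ (shift (s : Fin d → ℤ) x) = z s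
    have hPloc : ∀ x y, (∀ i ∈ F, x i = y i) → P x → P y := by
      intro x y hxy hx s
      rw [← hx s]
      refine hloc (shift (s : Fin d → ℤ) y) (shift (s : Fin d → ℤ) x) ?_
      intro j hj
      show y (j + (s : Fin d → ℤ)) = x (j + (s : Fin d → ℤ))
      exact (hxy _ (Finset.mem_biUnion.mpr ⟨(s : Fin d → ℤ), s.2,
        Finset.mem_image_of_mem _ hj⟩)).symm
    have hPiff : ∀ x y, (∀ i ∈ F, x i = y i) → (P x ↔ P y) := fun x y h =>
      ⟨hPloc x y h, hPloc y x fun i hi => (h i hi).symm⟩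
    have hL : μ {x | P x}
        = ∑ w : (F → A), if P (TMC.extF F w) then ∏ i, f (w i) else 0 :=
      TMC.measure_local_event hμ F P hPloc
    have hsing : ∀ xhat : (Fin d → ZMod N) → A, MeasurableSet ({xhat} : Set _) := by
      intro xhat
      have h : ({xhat} : Set ((Fin d → ZMod N) → A))
          = ⋂ u, (fun y : (Fin d → ZMod N) → A => y u) ⁻¹' {xhat u} := by
        ext y; simp [funext_iff]
      rw [h]
      exact MeasurableSet.iInter fun u =>
        (measurable_pi_apply u) (measurableSet_singleton _)
    have hR : μhat {xhat | P (torusExt xhat)}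
        = ∑ xhat : (Fin d → ZMod N) → A,
            if P (torusExt xhat) then ∏ u, f (xhat u) else 0 := by
      rw [TMC.measure_fintype_event hsing μhat (fun xhat => P (torusExt xhat))]
      simp only [hμhat]
      rfl
    -- the combinatorial bridge
    set e2 : ((Fin d → ZMod N) → A)
        ≃ ({u : Fin d → ZMod N // u ∈ G} → A) × ({u : Fin d → ZMod N // ¬ u ∈ G} → A) :=
      Equiv.piEquivPiSubtypeProd (fun u : Fin d → ZMod N => u ∈ G) (fun _ => A) with he2
    have toGmem : ∀ i : F, π (i : Fin d → ℤ) ∈ G := fun i => Finset.mem_image_of_mem π i.2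
    have hbij : Function.Bijective
        (fun i : {i // i ∈ F} => (⟨π (i : Fin d → ℤ), toGmem i⟩ : {u // u ∈ G})) := by
      constructor
      · intro i j hij
        exact Subtype.ext (hπinj _ i.2 _ j.2 (congrArg Subtype.val hij))
      · rintro ⟨u, hu⟩
        rcases Finset.mem_image.mp hu with ⟨i, hi, hπi⟩
        exact ⟨⟨i, hi⟩, Subtype.ext hπi⟩
    let eF := Equiv.ofBijective _ hbij
    have hcond : ∀ (v : {u // u ∈ G} → A) (r : {u // ¬ u ∈ G} → A),
        P (torusExt (e2.symm (v, r))) ↔ P (TMC.extF F (fun i : F => v (eF i))) := by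
      intro v r
      apply hPiff
      intro u hu
      have h1 : torusExt (e2.symm (v, r)) u = v ⟨π u, toGmem ⟨u, hu⟩⟩ := by
        show ((Equiv.piEquivPiSubtypeProd (fun u : Fin d → ZMod N => u ∈ G)
            (fun _ => A)).symm (v, r)) (π u) = v ⟨π u, toGmem ⟨u, hu⟩⟩
        rw [Equiv.piEquivPiSubtypeProd_symm_apply, dif_pos (toGmem ⟨u, hu⟩)]
      have h2 : TMC.extF F (fun i : F => v (eF i)) u = v ⟨π u, toGmem ⟨u, hu⟩⟩ := by
        rw [TMC.extF, dif_pos hu]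
        rfl
      rw [h1, h2]
    have hprod : ∀ (v : {u // u ∈ G} → A) (r : {u // ¬ u ∈ G} → A),
        (∏ u, f (e2.symm (v, r) u))
          = (∏ u : {u // u ∈ G}, f (v u)) * ∏ u : {u // ¬ u ∈ G}, f (r u) := by
      intro v r
      have hsplit : (∏ u, f (e2.symm (v, r) u))
          = (∏ u : {u : Fin d → ZMod N // u ∈ G}, f (e2.symm (v, r) ↑u))
            * ∏ u : {u : Fin d → ZMod N // ¬ u ∈ G}, f (e2.symm (v, r) ↑u) := by
        rw [← Fintype.prod_subtype_mul_prod_subtype (fun u : Fin d → ZMod N => u ∈ G)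
          (fun u => f (e2.symm (v, r) u))]
        congr!
      rw [hsplit]
      have hA : ∀ u : {u : Fin d → ZMod N // u ∈ G},
          f (e2.symm (v, r) ↑u) = f (v u) := fun u => by
        show f ((Equiv.piEquivPiSubtypeProd (fun u : Fin d → ZMod N => u ∈ G)
            (fun _ => A)).symm (v, r) ↑u) = f (v u)
        rw [Equiv.piEquivPiSubtypeProd_symm_apply, dif_pos u.2]
      have hB : ∀ u : {u : Fin d → ZMod N // ¬ u ∈ G},
          f (e2.symm (v, r) ↑u) = f (r u) := fun u => by
        show f ((Equiv.piEquivPiSubtypeProd (fun u : Fin d → ZMod N => u ∈ G)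
            (fun _ => A)).symm (v, r) ↑u) = f (r u)
        rw [Equiv.piEquivPiSubtypeProd_symm_apply, dif_neg u.2]
      exact congr_arg₂ HMul.hMul (Fintype.prod_congr _ _ hA) (Fintype.prod_congr _ _ hB)
    have keyeq : ∑ xhat : (Fin d → ZMod N) → A,
        (if P (torusExt xhat) then ∏ u, f (xhat u) else 0)
          = ∑ w : (F → A), if P (TMC.extF F w) then ∏ i, f (w i) else 0 := by
      have step1 : ∑ xhat : (Fin d → ZMod N) → A,
          (if P (torusExt xhat) then ∏ u, f (xhat u) else 0)
            = ∑ vr : ({u // u ∈ G} → A) × ({u // ¬ u ∈ G} → A),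
                (if P (torusExt (e2.symm vr)) then ∏ u, f (e2.symm vr u) else 0) :=
        (Equiv.sum_comp e2.symm
          (fun xhat => if P (torusExt xhat) then ∏ u, f (xhat u) else 0)).symm
      rw [step1, Fintype.sum_prod_type]
      have hone : ∑ r : ({u // ¬ u ∈ G} → A), ∏ u, f (r u) = 1 :=
        TMC.sum_prod_one (fun a => (hp a).le) hp1
      have step2 : ∀ v : {u // u ∈ G} → A,
          (∑ r : ({u // ¬ u ∈ G} → A),
            if P (torusExt (e2.symm (v, r))) then ∏ u, f (e2.symm (v, r) u) else 0)
          = if P (TMC.extF F (fun i : F => v (eF i)))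
              then ∏ u : {u // u ∈ G}, f (v u) else 0 := by
        intro v
        have : ∀ r : ({u // ¬ u ∈ G} → A),
            (if P (torusExt (e2.symm (v, r))) then ∏ u, f (e2.symm (v, r) u) else 0)
            = (if P (TMC.extF F (fun i : F => v (eF i)))
                then ∏ u : {u // u ∈ G}, f (v u) else 0) * ∏ u, f (r u) := by
          intro r
          rw [if_congr (hcond v r) rfl rfl, hprod v r]
          by_cases hc : P (TMC.extF F (fun i : F => v (eF i)))
          · rw [if_pos hc, if_pos hc]
          · rw [if_neg hc, if_neg hc, zero_mul]
        rw [Finset.sum_congr rfl (fun r _ => this r), ← Finset.mul_sum, hone, mul_one]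
      rw [Finset.sum_congr rfl (fun v _ => step2 v)]
      refine Fintype.sum_equiv (eF.arrowCongr (Equiv.refl A)).symm _ _ fun v => ?_
      have he : ((eF.arrowCongr (Equiv.refl A)).symm v) = fun i : F => v (eF i) := rfl
      rw [he]
      by_cases hc : P (TMC.extF F fun i : F => v (eF i))
      · rw [if_pos hc, if_pos hc]
        exact (Equiv.prod_comp eF (fun u => f (v u))).symm
      · rw [if_neg hc, if_neg hc]
    show μ {x | P x} = μhat {xhat | P (torusExt xhat)}
    rw [hL, hR, keyeq]
  -- the law of the W family
  have law_W : ∀ w : S → B,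
      μ {x | ∀ s : S, φ x (s : Fin d → ℤ) = w s} = ∏ s : S, ENNReal.ofReal (q (w s)) := by
    intro w
    set wext : (Fin d → ℤ) → B :=
      fun i => if h : i ∈ S then w ⟨i, h⟩ else Classical.arbitrary B with hwext
    have hEm : MeasurableSet {y : (Fin d → ℤ) → B | ∀ i ∈ S, y i = wext i} :=
      TMC.measurableSet_cyl S wext
    have hpre : {x | ∀ s : S, φ x (s : Fin d → ℤ) = w s}
        = φ ⁻¹' {y | ∀ i ∈ S, y i = wext i} := by
      ext x
      simp only [Set.mem_setOf_eq, Set.mem_preimage]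
      constructor
      · intro h i hi
        rw [show wext i = w ⟨i, hi⟩ from dif_pos hi]
        exact h ⟨i, hi⟩
      · intro h s
        have hh := h (s : Fin d → ℤ) s.2
        rwa [show wext (s : Fin d → ℤ) = w s from dif_pos s.2] at hh
    have hmap : μ (φ ⁻¹' {y | ∀ i ∈ S, y i = wext i}) = ν {y | ∀ i ∈ S, y i = wext i} := by
      rw [← hφ.map_eq, Measure.map_apply hφ.measurable hEm]
    rw [hpre, hmap, hν.2 S wext,
      ← Finset.prod_coe_sort S (fun i => ENNReal.ofReal (q (wext i)))]
    exact Finset.prod_congr rfl fun s _ => by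
      rw [show wext (s : Fin d → ℤ) = w s from dif_pos s.2]
  -- the almost-sure comparison
  have ae_part : ∀ᵐ x ∂μ, ∀ s : S,
      ψ (shift (s : Fin d → ℤ) x) ≠ some (φ x (s : Fin d → ℤ)) →
        ψ (shift (s : Fin d → ℤ) x) = none := by
    rw [MeasureTheory.ae_all_iff]
    intro s
    have hb : μ (shift (s : Fin d → ℤ) ⁻¹'
        {x | ψ x ≠ (if codingRadius μ φ x ≤ (n : ℕ∞) then (some (φ x 0) : Option B)
          else none)}) = 0 := by
      have hle := Measure.le_map_apply
        ((TMC.measurable_shift (A := A) (s : Fin d → ℤ)).aemeasurable (μ := μ))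
        ({x | ψ x ≠ (if codingRadius μ φ x ≤ (n : ℕ∞) then (some (φ x 0) : Option B)
          else none)})
      rw [TMC.map_shift_eq hμ (s : Fin d → ℤ), hae] at hle
      exact le_antisymm hle zero_le
    have hb' : ∀ᵐ x ∂μ, ψ (shift (s : Fin d → ℤ) x)
        = (if codingRadius μ φ (shift (s : Fin d → ℤ) x) ≤ (n : ℕ∞)
            then (some (φ (shift (s : Fin d → ℤ) x) 0) : Option B) else none) := by
      have hb2 : μ {x | ¬ (ψ (shift (s : Fin d → ℤ) x)
          = (if codingRadius μ φ (shift (s : Fin d → ℤ) x) ≤ (n : ℕ∞)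
              then (some (φ (shift (s : Fin d → ℤ) x) 0) : Option B) else none))} = 0 := hb
      exact MeasureTheory.ae_iff.mpr hb2
    filter_upwards [hb', hφ.equivariant (s : Fin d → ℤ)] with x h1 h2
    intro hne
    by_cases hc : codingRadius μ φ (shift (s : Fin d → ℤ) x) ≤ (n : ℕ∞)
    · exfalso
      apply hne
      rw [h1, if_pos hc, h2]
      show some ((shift (s : Fin d → ℤ) (φ x)) 0) = _
      simp [shift]
    · rw [h1, if_neg hc]
  -- transport everything through an encoding of the configuration space into `Type 0`
  let nA := Fintype.card A
  let eA : A ≃ Fin nA := Fintype.equivFin A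
  have hm1 : Measurable (eA : A → Fin nA) := by
    apply measurable_to_countable'
    intro y
    have h : (eA : A → Fin nA) ⁻¹' {y} = {eA.symm y} := by
      ext a; simp [Equiv.eq_symm_apply]
    rw [h]; exact measurableSet_singleton _
  have hm2 : Measurable (eA.symm : Fin nA → A) := by
    apply measurable_to_countable'
    intro y
    have h : (eA.symm : Fin nA → A) ⁻¹' {y} = {eA y} := by
      ext a; simp [Equiv.symm_apply_eq]
    rw [h]; exact measurableSet_singleton _
  let eAm : A ≃ᵐ Fin nA := ⟨eA, hm1, hm2⟩
  let E : ((Fin d → ℤ) → A) ≃ᵐ ((Fin d → ℤ) → Fin nA) :=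
    MeasurableEquiv.piCongrRight fun _ => eAm
  refine ⟨(Fin d → ℤ) → Fin nA, inferInstance, Measure.map E μ,
    Measure.isProbabilityMeasure_map E.measurable.aemeasurable,
    (fun ω s => ψ (shift (s : Fin d → ℤ) (E.symm ω))),
    (fun ω s => φ (E.symm ω) (s : Fin d → ℤ)), ?_, ?_, ?_⟩
  · intro z
    rw [MeasurableEquiv.map_apply]
    have hpre : (⇑E) ⁻¹' {ω | (fun s : S => ψ (shift (s : Fin d → ℤ) (E.symm ω))) = z}
        = {x | ∀ s : S, ψ (shift (s : Fin d → ℤ) x) = z s} := by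
      ext x
      simp [funext_iff]
    rw [hpre, law_core z]
  · intro w
    rw [MeasurableEquiv.map_apply]
    have hpre : (⇑E) ⁻¹' {ω | (fun s : S => φ (E.symm ω) (s : Fin d → ℤ)) = w}
        = {x | ∀ s : S, φ x (s : Fin d → ℤ) = w s} := by
      ext x
      simp [funext_iff]
    rw [hpre, law_W w]
  · rw [MeasureTheory.ae_iff, MeasurableEquiv.map_apply]
    have hpre : (⇑E) ⁻¹' {ω | ¬ ∀ s : S,
        ψ (shift (s : Fin d → ℤ) (E.symm ω)) ≠ some (φ (E.symm ω) (s : Fin d → ℤ)) →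
          ψ (shift (s : Fin d → ℤ) (E.symm ω)) = none}
        = {x | ¬ ∀ s : S,
            ψ (shift (s : Fin d → ℤ) x) ≠ some (φ x (s : Fin d → ℤ)) →
              ψ (shift (s : Fin d → ℤ) x) = none} := by
      ext x
      simp only [Set.mem_preimage, Set.mem_setOf_eq, MeasurableEquiv.symm_apply_apply]
    rw [hpre]
    exact MeasureTheory.ae_iff.mp ae_part
end
end

section
/- Let φ be a finitary homomorphism from the i.i.d. process with marginal p to the i.i.d. process with marginal q, n ∈ ℕ, and ψ : A^{B(0,n)} → B ∪ {*} the associated local map. Let N ≥ 2n+1, let x̂ : (ℤ/Nℤ)^d → A, let x̃ : ℤ^d → A be its N-periodic extension, and define ŷ_u = ψ((x̃(u+i))_{i∈B(0,n)}) for u ∈ [1,N]^d. Then ∏_{u∈[1,N]^d} p(x̃(u)) ≤ ∏_{u∈[1,N]^d, ŷ_u∈B} q(ŷ_u). (Equivalently, the μ-measure of the cylinder of x̂ is at most the ν-measure of the set of y ∈ B^{ℤ^d} agreeing with ŷ at all u ∈ [1,N]^d where ŷ_u ∈ B.) -/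
set_option linter.unusedSectionVars false
set_option maxHeartbeats 1000000

open MeasureTheory Finset Filter
open scoped Topology
open scoped ENNReal NNReal

noncomputable section

/-- The discrete cube `[1, N]^d ⊂ ℤ^d`. -/
def cube (d N : ℕ) : Finset (Fin d → ℤ) :=
  Fintype.piFinset fun _ => Finset.Icc (1 : ℤ) (N : ℤ)

/-! ### Auxiliary combinatorial lemmas -/

/-- canonical representative of a residue class in `[1, N]`. -/
def zrep {N : ℕ} (z : ZMod N) : ℤ := if z = 0 then N else z.val

lemma zrep_mem {N : ℕ} [NeZero N] (z : ZMod N) : zrep z ∈ Icc (1:ℤ) N := by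
  have hN : 0 < N := Nat.pos_of_ne_zero (NeZero.ne N)
  unfold zrep
  split_ifs with h
  · simp only [mem_Icc, le_refl, and_true]; exact_mod_cast hN
  · have h1 : 0 < z.val := ZMod.val_pos.mpr h
    have h2 : z.val < N := ZMod.val_lt z
    simp only [mem_Icc]
    constructor
    · exact_mod_cast h1
    · exact_mod_cast h2.le

lemma zrep_cast {N : ℕ} [NeZero N] (z : ZMod N) : ((zrep z : ℤ) : ZMod N) = z := by
  unfold zrep
  split_ifs with h
  · simp [h]
  · push_cast
    exact ZMod.natCast_rightInverse z

lemma cast_zrep_dvd {N : ℕ} [NeZero N] {j : ℤ} {z : ZMod N} (hz : (j : ZMod N) = z) :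
    (N:ℤ) ∣ j - zrep z := by
  have : ((zrep z : ℤ) : ZMod N) = (j : ZMod N) := by rw [zrep_cast, hz]
  exact ((ZMod.intCast_eq_intCast_iff _ _ N).mp this).dvd

/-- The number of elements of `[1, kN]` in a given residue class mod `N` is `k`. -/
lemma card_fiber_Icc {N : ℕ} [NeZero N] (k : ℕ) (z : ZMod N) :
    ((Icc (1:ℤ) ((k:ℤ)*N)).filter fun j : ℤ => ((j : ZMod N) = z)).card = k := by
  have hN : 0 < (N:ℤ) := by exact_mod_cast Nat.pos_of_ne_zero (NeZero.ne N)
  have hrz := zrep_mem z; simp only [mem_Icc] at hrz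
  have himg : ((Icc (1:ℤ) ((k:ℤ)*N)).filter fun j : ℤ => ((j : ZMod N) = z))
      = (range k).image (fun t : ℕ => zrep z + (N:ℤ) * t) := by
    ext j
    simp only [mem_filter, mem_Icc, mem_image, mem_range]
    constructor
    · rintro ⟨⟨h1, h2⟩, hz⟩
      obtain ⟨t, ht⟩ := cast_zrep_dvd hz
      have ht0 : 0 ≤ t := by nlinarith
      have htk : t < k := by nlinarith
      refine ⟨t.toNat, by omega, ?_⟩
      rw [Int.toNat_of_nonneg ht0]; omega
    · rintro ⟨t, htk, rfl⟩
      have htk' : (t:ℤ) ≤ (k:ℤ) - 1 := by omega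
      refine ⟨⟨by nlinarith, by nlinarith⟩, ?_⟩
      push_cast
      rw [zrep_cast]
      simp [ZMod.natCast_self]
  rw [himg, card_image_of_injective _ ?_, card_range]
  intro a b hab
  simp only at hab
  have h2 : (N:ℤ) * a = (N:ℤ) * b := by linarith
  exact_mod_cast mul_left_cancel₀ (ne_of_gt hN) h2

/-- the residue map `ℤ^d → (ℤ/Nℤ)^d`. -/
def resmap (d N : ℕ) (u : Fin d → ℤ) : Fin d → ZMod N := fun i => ((u i : ℤ) : ZMod N)

lemma cube_fiber_card {d N : ℕ} [NeZero N] (k : ℕ) (z : Fin d → ZMod N) :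
    ((cube d (k*N)).filter fun u => resmap d N u = z).card = k^d := by
  have : ((cube d (k*N)).filter fun u => resmap d N u = z)
      = Fintype.piFinset (fun i => (Icc (1:ℤ) ((k:ℤ)*N)).filter fun j : ℤ => ((j : ZMod N) = z i)) := by
    ext u
    simp only [mem_filter, cube, Fintype.mem_piFinset, funext_iff, resmap, Nat.cast_mul,
      ← forall_and]
  rw [this, Fintype.card_piFinset]
  simp [card_fiber_Icc]

lemma cube_image_resmap {d N M : ℕ} [NeZero N] (hNM : N ≤ M) :
    (cube d M).image (resmap d N) = Finset.univ := by
  apply Finset.eq_univ_of_forall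
  intro z
  simp only [mem_image]
  refine ⟨fun i => zrep (z i), ?_, ?_⟩
  · simp only [cube, Fintype.mem_piFinset]
    intro i
    have := zrep_mem (z i); simp only [mem_Icc] at this ⊢
    exact ⟨this.1, this.2.trans (by exact_mod_cast hNM)⟩
  · funext i; exact zrep_cast (z i)

lemma prod_cube_periodic {d N : ℕ} [NeZero N] {M₀ : Type*} [CommMonoid M₀]
    (H : (Fin d → ZMod N) → M₀) (k : ℕ) (hk : 1 ≤ k) :
    ∏ u ∈ cube d (k*N), H (resmap d N u) = (∏ u ∈ cube d N, H (resmap d N u)) ^ (k^d) := by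
  have hNM : N ≤ k*N := Nat.le_mul_of_pos_left N hk
  rw [Finset.prod_comp H (resmap d N), Finset.prod_comp H (resmap d N),
    cube_image_resmap hNM, cube_image_resmap (le_refl N)]
  have h1 : ∀ z : Fin d → ZMod N, ((cube d N).filter fun u => resmap d N u = z).card = 1 := by
    intro z
    have := cube_fiber_card (d := d) (N := N) 1 z
    rwa [one_mul, one_pow] at this
  rw [← Finset.prod_pow]
  apply Finset.prod_congr rfl
  intro z _
  rw [cube_fiber_card k z, h1 z, pow_one]

/-! ### Auxiliary measure-theoretic lemmas -/

section Meas
variable {d : ℕ} {A : Type*} [Fintype A] [MeasurableSpace A] [MeasurableSingletonClass A]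

lemma measurable_shift (u : Fin d → ℤ) : Measurable (shift (A := A) u) :=
  measurable_pi_lambda _ fun v => measurable_pi_apply (v + u)

lemma measurableSet_cyl (s : Finset (Fin d → ℤ)) (w : (Fin d → ℤ) → A) :
    MeasurableSet {x : (Fin d → ℤ) → A | ∀ i ∈ s, x i = w i} := by
  have : {x : (Fin d → ℤ) → A | ∀ i ∈ s, x i = w i}
      = ⋂ i ∈ (s : Set (Fin d → ℤ)), (fun x => x i) ⁻¹' {w i} := by
    ext x; simp
  rw [this]
  exact MeasurableSet.biInter (s : Set (Fin d → ℤ)).to_countable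
    fun i _ => (measurable_pi_apply i) (measurableSet_singleton _)

/-- the π-system of cylinder events -/
def Cyl (d : ℕ) (A : Type*) : Set (Set ((Fin d → ℤ) → A)) :=
  {S | ∃ (s : Finset (Fin d → ℤ)) (w : (Fin d → ℤ) → A), S = {x | ∀ i ∈ s, x i = w i}}

lemma isPiSystem_Cyl : IsPiSystem (Cyl d A) := by
  rintro S ⟨s, w, rfl⟩ T ⟨t, v, rfl⟩ hne
  obtain ⟨z, hz1, hz2⟩ := hne
  refine ⟨s ∪ t, z, ?_⟩
  ext x
  simp only [Set.mem_inter_iff, Set.mem_setOf_eq, mem_union]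
  constructor
  · rintro ⟨h1, h2⟩ i (hi | hi)
    · rw [h1 i hi, ← hz1 i hi]
    · rw [h2 i hi, ← hz2 i hi]
  · intro h
    exact ⟨fun i hi => (h i (Or.inl hi)).trans (hz1 i hi),
      fun i hi => (h i (Or.inr hi)).trans (hz2 i hi)⟩

lemma generateFrom_Cyl :
    (inferInstance : MeasurableSpace ((Fin d → ℤ) → A)) = MeasurableSpace.generateFrom (Cyl d A) := by
  refine le_antisymm ?_ (MeasurableSpace.generateFrom_le ?_)
  · have hev : ∀ u : Fin d → ℤ,
        @Measurable _ _ (MeasurableSpace.generateFrom (Cyl d A)) _ (fun x => x u) := by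
      intro u t _
      have : (fun x : (Fin d → ℤ) → A => x u) ⁻¹' t
          = ⋃ a ∈ t, {x | ∀ i ∈ ({u} : Finset _), x i = Function.const _ a i} := by
        ext x; simp
      rw [this]
      exact MeasurableSet.biUnion t.to_countable
        fun a _ => MeasurableSpace.measurableSet_generateFrom ⟨{u}, Function.const _ a, rfl⟩
    have : @Measurable _ _ (MeasurableSpace.generateFrom (Cyl d A)) MeasurableSpace.pi
        (id : ((Fin d → ℤ) → A) → ((Fin d → ℤ) → A)) :=
      @measurable_pi_lambda _ _ _ (MeasurableSpace.generateFrom (Cyl d A)) _ id hev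
    intro s hs
    simpa using this hs
  · rintro S ⟨s, w, rfl⟩
    exact measurableSet_cyl s w

lemma map_shift_eq {p : A → ℝ} {μ : Measure ((Fin d → ℤ) → A)} (hμ : IsIID μ p)
    (u : Fin d → ℤ) : Measure.map (shift u) μ = μ := by
  haveI := hμ.1
  haveI : IsProbabilityMeasure (Measure.map (shift (A := A) u) μ) :=
    Measure.isProbabilityMeasure_map (measurable_shift u).aemeasurable
  refine ext_of_generate_finite (Cyl d A) generateFrom_Cyl isPiSystem_Cyl ?_ (by simp)
  rintro S ⟨s, w, rfl⟩
  rw [Measure.map_apply (measurable_shift u) (measurableSet_cyl s w)]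
  have hpre : shift u ⁻¹' {x : (Fin d → ℤ) → A | ∀ i ∈ s, x i = w i}
      = {x | ∀ j ∈ s.image (· + u), x j = w (j - u)} := by
    ext x
    simp only [Set.mem_preimage, Set.mem_setOf_eq, shift, Finset.mem_image]
    constructor
    · rintro h j ⟨i, hi, rfl⟩
      rw [add_sub_cancel_right]; exact h i hi
    · intro h i hi
      have := h (i + u) ⟨i, hi, rfl⟩
      rwa [add_sub_cancel_right] at this
  rw [hpre, hμ.2, hμ.2]
  rw [Finset.prod_image (fun a _ b _ hab => by simpa using hab)]
  simp

lemma null_preimage_shift {p : A → ℝ} {μ : Measure ((Fin d → ℤ) → A)} (hμ : IsIID μ p)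
    (u : Fin d → ℤ) {E : Set ((Fin d → ℤ) → A)} (hE : μ E = 0) : μ (shift u ⁻¹' E) = 0 := by
  obtain ⟨E', hsub, hEm, hE0⟩ := exists_measurable_superset_of_null hE
  refine measure_mono_null (Set.preimage_mono hsub) ?_
  calc μ (shift u ⁻¹' E')
      = Measure.map (shift u) μ E' := (Measure.map_apply (measurable_shift u) hEm).symm
    _ = 0 := by rw [map_shift_eq hμ u, hE0]

end Meas

/-- **Lemma 2.3.** For any torus configuration `x̂`, the `μ`-measure of its cylinder is at most
the `ν`-measure of the set of `y` agreeing with `φ̂ⁿ(x̂)` wherever the latter is determined: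
`∏_{u∈[1,N]^d} p(x̃(u)) ≤ ∏_{u∈[1,N]^d, ŷ_u ∈ B} q(ŷ_u)`. -/
theorem cylinder_measure_le_image_measure
    {d : ℕ} (hd : 1 ≤ d)
    {A B : Type*} [Fintype A] [Nonempty A] [Fintype B] [Nonempty B]
    [MeasurableSpace A] [MeasurableSingletonClass A]
    [MeasurableSpace B] [MeasurableSingletonClass B]
    (p : A → ℝ) (q : B → ℝ) (hp : ∀ a, 0 < p a) (hq : ∀ b, 0 < q b)
    (hp1 : ∑ a, p a = 1) (hq1 : ∑ b, q b = 1)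
    (μ : Measure ((Fin d → ℤ) → A)) (ν : Measure ((Fin d → ℤ) → B))
    (hμ : IsIID μ p) (hν : IsIID ν q)
    (φ : ((Fin d → ℤ) → A) → ((Fin d → ℤ) → B))
    (hφ : IsFactorMap μ ν φ)
    (hfin : ∀ᵐ x ∂μ, codingRadius μ φ x < ⊤)
    (n : ℕ) (ψ : ((Fin d → ℤ) → A) → Option B)
    (hloc : ∀ x y, (∀ i ∈ ball d n, x i = y i) → ψ x = ψ y)
    (hae : μ {x | ψ x ≠
      (if codingRadius μ φ x ≤ (n : ℕ∞) then (some (φ x 0) : Option B) else none)} = 0)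
    (N : ℕ) (hNn : 2 * n + 1 ≤ N)
    (xhat : (Fin d → ZMod N) → A) :
    ∏ u ∈ cube d N, p (torusExt xhat u)
      ≤ ∏ u ∈ cube d N, (ψ (shift u (torusExt xhat))).elim 1 q := by
  classical
  haveI : NeZero N := ⟨by omega⟩
  set xt : (Fin d → ℤ) → A := torusExt xhat with hxt
  set P : ℝ := ∏ u ∈ cube d N, p (torusExt xhat u) with hPdef
  set Q : ℝ := ∏ u ∈ cube d N, (ψ (shift u (torusExt xhat))).elim 1 q with hQdef
  have hPpos : 0 < P := Finset.prod_pos fun u _ => hp _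
  have hgpos : ∀ u : Fin d → ℤ, 0 < (ψ (shift u xt)).elim 1 q := by
    intro u
    cases hb : ψ (shift u xt) with
    | none => simp
    | some b => simpa [hb] using hq b
  have hQpos : 0 < Q := Finset.prod_pos fun u _ => hgpos u
  set pm : ℝ := Finset.univ.inf' Finset.univ_nonempty p with hpmdef
  have hpmpos : 0 < pm := by
    rw [hpmdef, Finset.lt_inf'_iff]; exact fun b _ => hp b
  have hpmle : ∀ a : A, pm ≤ p a := fun a => Finset.inf'_le _ (Finset.mem_univ a)
  -- periodicity of shifts of the periodic extension
  have hshift_congr : ∀ u v : Fin d → ℤ, resmap d N u = resmap d N v →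
      shift u xt = shift v xt := by
    intro u v huv
    funext w
    show xt (w + u) = xt (w + v)
    show xhat _ = xhat _
    congr 1
    funext i
    have h1 : ((u i : ℤ) : ZMod N) = ((v i : ℤ) : ZMod N) := congrFun huv i
    show (((w + u) i : ℤ) : ZMod N) = (((w + v) i : ℤ) : ZMod N)
    simp only [Pi.add_apply]
    push_cast
    rw [h1]
  set G : (Fin d → ZMod N) → ℝ := fun z => (ψ (shift (fun i => zrep (z i)) xt)).elim 1 q
    with hGdef
  have hgG : ∀ u : Fin d → ℤ, (ψ (shift u xt)).elim 1 q = G (resmap d N u) := by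
    intro u
    have h : shift u xt = shift (fun i => zrep (resmap d N u i)) xt := by
      apply hshift_congr
      funext i
      exact (zrep_cast _).symm
    rw [hGdef, h]
  -- the bad (null) set
  set E0 : Set ((Fin d → ℤ) → A) := {x | ψ x ≠
      (if codingRadius μ φ x ≤ (n : ℕ∞) then (some (φ x 0) : Option B) else none)} with hE0
  set Bad : Set ((Fin d → ℤ) → A) :=
    ⋃ u : Fin d → ℤ, (shift u ⁻¹' E0 ∪ {x | φ (shift u x) ≠ shift u (φ x)}) with hBadDef
  have hBad : μ Bad = 0 := by
    rw [hBadDef]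
    apply measure_iUnion_null
    intro u
    apply measure_union_null
    · exact null_preimage_shift hμ u hae
    · have h := hφ.equivariant u
      rw [ae_iff] at h
      exact h
  -- the key inequality for each k
  have key : ∀ k : ℕ, 1 ≤ k →
      P ^ k ^ d * pm ^ ((k*N + 2*n)^d - (k*N)^d) ≤ Q ^ k ^ d := by
    intro k hk
    set D : Finset (Fin d → ℤ) :=
      Fintype.piFinset (fun _ : Fin d => Finset.Icc (1 - (n:ℤ)) (((k*N : ℕ):ℤ) + n)) with hD
    have hWD : cube d (k*N) ⊆ D := by
      intro u hu
      simp only [cube, Fintype.mem_piFinset, Finset.mem_Icc, hD] at hu ⊢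
      intro i; have := hu i; omega
    have hcardD : D.card = (k*N + 2*n)^d := by
      rw [hD, Fintype.card_piFinset]
      simp only [Int.card_Icc]
      rw [Finset.prod_const]
      congr 1
      · omega
      · simp
    have hcardW : (cube d (k*N)).card = (k*N)^d := by
      rw [cube, Fintype.card_piFinset]
      simp only [Int.card_Icc]
      rw [Finset.prod_const]
      congr 1
      · omega
      · simp
    have hμC : μ {x | ∀ i ∈ D, x i = xt i} = ENNReal.ofReal (∏ i ∈ D, p (xt i)) := by
      rw [hμ.2 D xt, ENNReal.ofReal_prod_of_nonneg (fun i _ => (hp _).le)]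
    set S : Finset (Fin d → ℤ) := (cube d (k*N)).filter (fun u => (ψ (shift u xt)).isSome)
      with hS
    set yh : (Fin d → ℤ) → B := fun u => (ψ (shift u xt)).getD (Classical.arbitrary B) with hyh
    have hνY : ν {y | ∀ u ∈ S, y u = yh u} = ENNReal.ofReal (∏ u ∈ S, q (yh u)) := by
      rw [hν.2 S yh, ENNReal.ofReal_prod_of_nonneg (fun i _ => (hq _).le)]
    have hsub : {x | ∀ i ∈ D, x i = xt i} ⊆ (φ ⁻¹' {y | ∀ u ∈ S, y u = yh u}) ∪ Bad := by
      intro x hx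
      by_cases hxB : x ∈ Bad
      · exact Or.inr hxB
      refine Or.inl ?_
      intro u huS
      rw [hS, Finset.mem_filter] at huS
      obtain ⟨huW, husome⟩ := huS
      obtain ⟨b, hb⟩ := Option.isSome_iff_exists.mp husome
      have hagree : ∀ i ∈ ball d n, (shift u x) i = (shift u xt) i := by
        intro i hi
        show x (i + u) = xt (i + u)
        apply hx
        simp only [ball, Fintype.mem_piFinset, Finset.mem_Icc] at hi
        simp only [cube, Fintype.mem_piFinset, Finset.mem_Icc] at huW
        simp only [hD, Fintype.mem_piFinset, Finset.mem_Icc]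
        intro j
        have h1 := hi j; have h2 := huW j
        simp only [Pi.add_apply]
        omega
      have hψx : ψ (shift u x) = some b := by rw [hloc _ _ hagree, hb]
      rw [hBadDef, Set.mem_iUnion] at hxB
      push_neg at hxB
      have hxB' := hxB u
      rw [Set.mem_union] at hxB'
      push_neg at hxB'
      obtain ⟨hx1, hx2⟩ := hxB'
      have heq : ψ (shift u x) =
          if codingRadius μ φ (shift u x) ≤ (n:ℕ∞) then some (φ (shift u x) 0) else none := by
        have : shift u x ∉ E0 := hx1
        rw [hE0] at this
        simpa using this
      rw [hψx] at heq
      have hx2' : φ (shift u x) = shift u (φ x) := by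
        simpa using hx2
      split_ifs at heq with hcr
      have hb0 : φ (shift u x) 0 = b := (Option.some_injective _ heq.symm)
      show φ x u = yh u
      have hyhu : yh u = b := by rw [hyh]; simp [hb]
      rw [hyhu]
      have h0u : shift u (φ x) 0 = φ x u := by
        show φ x (0 + u) = φ x u
        rw [zero_add]
      rw [← h0u, ← hx2', hb0]
    have hle : μ {x | ∀ i ∈ D, x i = xt i} ≤ ν {y | ∀ u ∈ S, y u = yh u} := by
      calc μ {x | ∀ i ∈ D, x i = xt i}
          ≤ μ ((φ ⁻¹' {y | ∀ u ∈ S, y u = yh u}) ∪ Bad) := measure_mono hsub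
        _ ≤ μ (φ ⁻¹' {y | ∀ u ∈ S, y u = yh u}) + μ Bad := measure_union_le _ _
        _ = μ (φ ⁻¹' {y | ∀ u ∈ S, y u = yh u}) := by rw [hBad, add_zero]
        _ = ν {y | ∀ u ∈ S, y u = yh u} := by
            rw [← hφ.map_eq, Measure.map_apply hφ.measurable (measurableSet_cyl S yh)]
    have hreal : ∏ i ∈ D, p (xt i) ≤ ∏ u ∈ S, q (yh u) := by
      rw [hμC, hνY] at hle
      exact (ENNReal.ofReal_le_ofReal_iff (Finset.prod_nonneg fun i _ => (hq _).le)).mp hle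
    have hq2 : ∏ u ∈ S, q (yh u) = ∏ u ∈ cube d (k*N), (ψ (shift u xt)).elim 1 q := by
      rw [hS, Finset.prod_filter]
      apply Finset.prod_congr rfl
      intro u _
      cases hbb : ψ (shift u xt) with
      | none => simp [hbb, hyh]
      | some b => simp [hbb, hyh]
    have hWQ : ∏ u ∈ cube d (k*N), (ψ (shift u xt)).elim 1 q = Q ^ k ^ d := by
      calc ∏ u ∈ cube d (k*N), (ψ (shift u xt)).elim 1 q
          = ∏ u ∈ cube d (k*N), G (resmap d N u) :=
            Finset.prod_congr rfl fun u _ => hgG u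
        _ = (∏ u ∈ cube d N, G (resmap d N u)) ^ k ^ d := prod_cube_periodic G k hk
        _ = Q ^ k ^ d := by
            rw [hQdef]
            congr 1
            exact (Finset.prod_congr rfl fun u _ => (hgG u).symm)
    have hWP : ∏ u ∈ cube d (k*N), p (xt u) = P ^ k ^ d := by
      calc ∏ u ∈ cube d (k*N), p (xt u)
          = ∏ u ∈ cube d (k*N), (fun z => p (xhat z)) (resmap d N u) := rfl
        _ = (∏ u ∈ cube d N, (fun z => p (xhat z)) (resmap d N u)) ^ k ^ d :=
            prod_cube_periodic (d := d) (N := N) (fun z => p (xhat z)) k hk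
        _ = P ^ k ^ d := rfl
    have hsplit : (∏ i ∈ D \ cube d (k*N), p (xt i)) * (P ^ k ^ d) = ∏ i ∈ D, p (xt i) := by
      rw [← hWP]; exact Finset.prod_sdiff hWD
    have hbound : pm ^ ((k*N + 2*n)^d - (k*N)^d) ≤ ∏ i ∈ D \ cube d (k*N), p (xt i) := by
      have hcard : (D \ cube d (k*N)).card = (k*N + 2*n)^d - (k*N)^d := by
        rw [Finset.card_sdiff_of_subset hWD, hcardD, hcardW]
      calc pm ^ ((k*N + 2*n)^d - (k*N)^d) = ∏ _i ∈ D \ cube d (k*N), pm := by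
            rw [Finset.prod_const, hcard]
        _ ≤ ∏ i ∈ D \ cube d (k*N), p (xt i) :=
            Finset.prod_le_prod (fun _ _ => hpmpos.le) (fun i _ => hpmle _)
    calc P ^ k ^ d * pm ^ ((k*N + 2*n)^d - (k*N)^d)
        ≤ P ^ k ^ d * ∏ i ∈ D \ cube d (k*N), p (xt i) :=
          mul_le_mul_of_nonneg_left hbound (by positivity)
      _ = ∏ i ∈ D, p (xt i) := by rw [mul_comm, hsplit]
      _ ≤ ∏ u ∈ S, q (yh u) := hreal
      _ = Q ^ k ^ d := by rw [hq2, hWQ]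
  -- limiting argument
  have hlog : ∀ k : ℕ, 1 ≤ k →
      Real.log P + ((((k*N + 2*n)^d - (k*N)^d : ℕ)) : ℝ)/(k:ℝ)^d * Real.log pm
        ≤ Real.log Q := by
    intro k hk
    have hk0 : (0:ℝ) < (k:ℝ) := by exact_mod_cast hk
    have hkd : (0:ℝ) < (k:ℝ)^d := by positivity
    have h1 := Real.log_le_log (by positivity) (key k hk)
    rw [Real.log_mul (by positivity) (by positivity), Real.log_pow, Real.log_pow,
      Real.log_pow] at h1
    have hcast : ((k ^ d : ℕ) : ℝ) = (k:ℝ)^d := by push_cast; ring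
    rw [hcast] at h1
    set e : ℝ := (((k*N + 2*n)^d - (k*N)^d : ℕ) : ℝ)
    calc Real.log P + e/(k:ℝ)^d * Real.log pm
        = ((k:ℝ)^d * Real.log P + e * Real.log pm)/(k:ℝ)^d := by field_simp
      _ ≤ ((k:ℝ)^d * Real.log Q)/(k:ℝ)^d := (div_le_div_iff_of_pos_right hkd).mpr h1
      _ = Real.log Q := by field_simp
  have htend0 : Tendsto (fun k : ℕ =>
      ((((k*N + 2*n)^d - (k*N)^d : ℕ)) : ℝ)/(k:ℝ)^d) atTop (𝓝 0) := by
    have heq : ∀ᶠ k : ℕ in atTop, ((((k*N + 2*n)^d - (k*N)^d : ℕ)) : ℝ)/(k:ℝ)^d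
        = ((N:ℝ) + 2*(n:ℝ)*(k:ℝ)⁻¹)^d - ((N:ℝ))^d := by
      filter_upwards [eventually_ge_atTop 1] with k hk
      have hk0 : (k:ℝ) ≠ 0 := by positivity
      have hle : (k*N)^d ≤ (k*N + 2*n)^d := Nat.pow_le_pow_left (by omega) d
      rw [Nat.cast_sub hle]
      push_cast
      rw [sub_div, ← div_pow, ← div_pow]
      have e1 : ((k:ℝ)*N + 2*n)/(k:ℝ) = (N:ℝ) + 2*(n:ℝ)*(k:ℝ)⁻¹ := by field_simp
      have e2 : ((k:ℝ)*N)/(k:ℝ) = (N:ℝ) := by field_simp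
      rw [e1, e2]
    have l0 : Tendsto (fun k : ℕ => (k:ℝ)⁻¹) atTop (𝓝 0) :=
      tendsto_inv_atTop_nhds_zero_nat
    have l1 : Tendsto (fun k : ℕ => ((N:ℝ) + 2*(n:ℝ)*(k:ℝ)⁻¹)^d - ((N:ℝ))^d) atTop
        (𝓝 (((N:ℝ) + 2*(n:ℝ)*0)^d - ((N:ℝ))^d)) :=
      ((tendsto_const_nhds.add ((l0.const_mul _))).pow d).sub tendsto_const_nhds
    have : (((N:ℝ) + 2*(n:ℝ)*0)^d - ((N:ℝ))^d) = 0 := by ring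
    rw [this] at l1
    exact l1.congr' (Filter.EventuallyEq.symm heq)
  have htend : Tendsto (fun k : ℕ => Real.log P
      + ((((k*N + 2*n)^d - (k*N)^d : ℕ)) : ℝ)/(k:ℝ)^d * Real.log pm) atTop
      (𝓝 (Real.log P)) := by
    have h := Filter.Tendsto.const_add (Real.log P) (htend0.mul_const (Real.log pm))
    simpa using h
  have hlogPQ : Real.log P ≤ Real.log Q :=
    le_of_tendsto htend (eventually_atTop.mpr ⟨1, hlog⟩)
  exact (Real.log_le_log_iff hPpos hQpos).mp hlogPQ
end
end
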